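/- Let T, N, B₁, B₂ : ℝ → ℝ⁴ be a Frenet frame of a partially null curve in E₁⁴ with Frenet equations T' = κN, N' = -κT + τB₁, B₁' = 0, B₂' = -τN, where κ and τ are nonzero constants. Then the curve is a k-type slant helix for k ∈ {0, 1, 3}, with an explicit constant axis D = (τ/κ)T + B₁ + B₂. -/

import Mathlib

noncomputable def g (v w : Fin 4 → ℝ) : ℝ :=
  -(v 0 * w 0) + v 1 * w 1 + v 2 * w 2 + v 3 * w 3

/-
The axis D = (τ/κ) T + B₁ + B₂ is constant because the Frenet equations make the N-components of
the derivatives cancel: (τ/κ) κ N + 0 - τ N = 0. Its pairings with T, N and B₂ are then read off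
the Gram matrix of the frame: τ/κ, 0 and 1. The pairing g(B₁, D) = 1 shows D ≠ 0.
-/

lemma g_comm (v w : Fin 4 → ℝ) : g v w = g w v := by
  simp only [g]; ring

lemma g_add_right (u v w : Fin 4 → ℝ) : g u (v + w) = g u v + g u w := by
  simp only [g, Pi.add_apply]; ring

lemma g_smul_right (a : ℝ) (v w : Fin 4 → ℝ) : g v (a • w) = a * g v w := by
  simp only [g, Pi.smul_apply, smul_eq_mul]; ring

lemma g_zero_right (v : Fin 4 → ℝ) : g v 0 = 0 := by
  simpa using g_smul_right 0 v v

lemma g_smul_add_add_right (a : ℝ) (u v w x : Fin 4 → ℝ) :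
    g u (a • v + w + x) = a * g u v + g u w + g u x := by
  rw [g_add_right, g_add_right, g_smul_right]

lemma hasDerivAt_div_smul_add_add_eq_zero {E : Type*} [NormedAddCommGroup E] [NormedSpace ℝ E]
    {T N B₁ B₂ : ℝ → E} {κ τ s : ℝ} (hκ : κ ≠ 0) (hT : HasDerivAt T (κ • N s) s)
    (hB₁ : HasDerivAt B₁ 0 s) (hB₂ : HasDerivAt B₂ ((-τ) • N s) s) :
    HasDerivAt (fun r => (τ / κ) • T r + B₁ r + B₂ r) 0 s := by
  have h := ((hT.const_smul (τ / κ)).add hB₁).add hB₂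
  rwa [smul_smul, div_mul_cancel₀ _ hκ, add_zero, neg_smul, add_neg_cancel] at h

theorem stmt7_general
    (T N B₁ B₂ : ℝ → Fin 4 → ℝ) (κ τ : ℝ)
    (hκ0 : κ ≠ 0)
    (hT : ∀ s, HasDerivAt T (κ • N s) s)
    (hB₁ : ∀ s, HasDerivAt B₁ (0 : Fin 4 → ℝ) s)
    (hB₂ : ∀ s, HasDerivAt B₂ ((-τ) • N s) s)
    (hTT : ∀ s, g (T s) (T s) = 1)
    (hB₁B₁ : ∀ s, g (B₁ s) (B₁ s) = 0) (hB₂B₂ : ∀ s, g (B₂ s) (B₂ s) = 0)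
    (hB₁B₂ : ∀ s, g (B₁ s) (B₂ s) = 1)
    (hTN : ∀ s, g (T s) (N s) = 0) (hTB₁ : ∀ s, g (T s) (B₁ s) = 0)
    (hTB₂ : ∀ s, g (T s) (B₂ s) = 0) (hNB₁ : ∀ s, g (N s) (B₁ s) = 0)
    (hNB₂ : ∀ s, g (N s) (B₂ s) = 0) :
    (∀ s, HasDerivAt (fun r => (τ / κ) • T r + B₁ r + B₂ r) (0 : Fin 4 → ℝ) s) ∧
    (∀ s, (τ / κ) • T s + B₁ s + B₂ s ≠ 0) ∧
    (∃ a : ℝ, ∀ s, g (T s) ((τ / κ) • T s + B₁ s + B₂ s) = a) ∧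
    (∃ a : ℝ, ∀ s, g (N s) ((τ / κ) • T s + B₁ s + B₂ s) = a) ∧
    (∃ a : ℝ, ∀ s, g (B₂ s) ((τ / κ) • T s + B₁ s + B₂ s) = a) := by
  refine ⟨fun s => hasDerivAt_div_smul_add_add_eq_zero hκ0 (hT s) (hB₁ s) (hB₂ s),
    fun s hD => ?_, ⟨τ / κ, fun s => ?_⟩, ⟨0, fun s => ?_⟩, ⟨1, fun s => ?_⟩⟩
  · have hB₁D : g (B₁ s) ((τ / κ) • T s + B₁ s + B₂ s) = 1 := by
      rw [g_smul_add_add_right, g_comm, hTB₁, hB₁B₁, hB₁B₂]; ring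
    rw [hD, g_zero_right] at hB₁D
    exact zero_ne_one hB₁D
  · rw [g_smul_add_add_right, hTT, hTB₁, hTB₂]; ring
  · rw [g_smul_add_add_right, g_comm, hTN, hNB₁, hNB₂]; ring
  · rw [g_smul_add_add_right, g_comm, hTB₂, g_comm, hB₁B₂, hB₂B₂]; ring

theorem stmt7
    (T N B₁ B₂ : ℝ → Fin 4 → ℝ) (κ τ : ℝ)
    (hκ0 : κ ≠ 0) (hτ0 : τ ≠ 0)
    (hT : ∀ s, HasDerivAt T (κ • N s) s)
    (hN : ∀ s, HasDerivAt N ((-κ) • T s + τ • B₁ s) s)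
    (hB₁ : ∀ s, HasDerivAt B₁ (0 : Fin 4 → ℝ) s)
    (hB₂ : ∀ s, HasDerivAt B₂ ((-τ) • N s) s)
    (hTT : ∀ s, g (T s) (T s) = 1) (hNN : ∀ s, g (N s) (N s) = 1)
    (hB₁B₁ : ∀ s, g (B₁ s) (B₁ s) = 0) (hB₂B₂ : ∀ s, g (B₂ s) (B₂ s) = 0)
    (hB₁B₂ : ∀ s, g (B₁ s) (B₂ s) = 1)
    (hTN : ∀ s, g (T s) (N s) = 0) (hTB₁ : ∀ s, g (T s) (B₁ s) = 0)
    (hTB₂ : ∀ s, g (T s) (B₂ s) = 0) (hNB₁ : ∀ s, g (N s) (B₁ s) = 0)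
    (hNB₂ : ∀ s, g (N s) (B₂ s) = 0) :
    (∀ s, HasDerivAt (fun r => (τ / κ) • T r + B₁ r + B₂ r) (0 : Fin 4 → ℝ) s) ∧
    (∀ s, (τ / κ) • T s + B₁ s + B₂ s ≠ 0) ∧
    (∃ a : ℝ, ∀ s, g (T s) ((τ / κ) • T s + B₁ s + B₂ s) = a) ∧
    (∃ a : ℝ, ∀ s, g (N s) ((τ / κ) • T s + B₁ s + B₂ s) = a) ∧
    (∃ a : ℝ, ∀ s, g (B₂ s) ((τ / κ) • T s + B₁ s + B₂ s) = a) :=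
  stmt7_general T N B₁ B₂ κ τ hκ0 hT hB₁ hB₂ hTT hB₁B₁ hB₂B₂ hB₁B₂ hTN hTB₁ hTB₂ hNB₁ hNB₂
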